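/- arXiv:1511.02513 — 4 statements merged into one kernel-verified Lean document; each statement's English description precedes it below -/
import Mathlib

section
/- Let F be a finite nonempty set, f : F → ℝ a function, and η > 0. Define a random variable X on F by P[X = x] = exp(η f(x)) / C where C = Σ_{x∈F} exp(η f(x)). Then E[f(X)] ≥ max_{x∈F} f(x) − (1/η) log|F|. -/
/-- Utility guarantee of the exponential mechanism: sampling `x` with probability
proportional to `exp (η * f x)` yields expected value within `(1/η) * log |F|`
of the maximum of `f`. -/
theorem exponential_mechanism_utility
    {F : Type*} [Fintype F] [Nonempty F] (f : F → ℝ) (η : ℝ) (hη : 0 < η)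
    (C : ℝ) (hC : C = ∑ x : F, Real.exp (η * f x)) :
    (Finset.univ.sup' Finset.univ_nonempty f) - (1 / η) * Real.log (Fintype.card F)
      ≤ ∑ x : F, (Real.exp (η * f x) / C) * f x := by
  obtain ⟨x₀, -, hx₀⟩ := Finset.exists_mem_eq_sup' (Finset.univ_nonempty (α := F)) f
  set M := Finset.univ.sup' Finset.univ_nonempty f with hM
  have hCpos : 0 < C := by
    rw [hC]; exact Finset.sum_pos (fun x _ => Real.exp_pos _) Finset.univ_nonempty
  set p : F → ℝ := fun x => Real.exp (η * f x) / C with hp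
  have hppos : ∀ x, 0 < p x := fun x => div_pos (Real.exp_pos _) hCpos
  have hpsum : ∑ x : F, p x = 1 := by
    rw [hp]; simp only
    rw [← Finset.sum_div, ← hC, div_self hCpos.ne']
  have jensen := (strictConcaveOn_log_Ioi.concaveOn).le_map_sum
    (t := Finset.univ) (w := p) (p := fun x => (p x)⁻¹)
    (fun x _ => (hppos x).le) hpsum (fun x _ => Set.mem_Ioi.mpr (inv_pos.mpr (hppos x)))
  have h1 : ∑ x : F, p x • (p x)⁻¹ = (Fintype.card F : ℝ) := by
    simp [smul_eq_mul, mul_inv_cancel₀ (hppos _).ne', Finset.card_univ]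
  have h2 : ∀ x, Real.log ((p x)⁻¹) = Real.log C - η * f x := by
    intro x
    rw [Real.log_inv, hp]
    simp only
    rw [Real.log_div (Real.exp_ne_zero _) hCpos.ne', Real.log_exp]
    ring
  have h3 : ∑ x : F, p x • Real.log ((p x)⁻¹)
      = Real.log C - η * ∑ x : F, p x * f x := by
    simp only [smul_eq_mul, h2, mul_sub]
    rw [Finset.sum_sub_distrib, ← Finset.sum_mul, hpsum, one_mul, Finset.mul_sum]
    congr 1
    exact Finset.sum_congr rfl fun x _ => by ring
  rw [h3, h1] at jensen
  have hMC : η * M ≤ Real.log C := by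
    have hle : Real.exp (η * M) ≤ C := by
      rw [hC, hx₀]
      exact Finset.single_le_sum (f := fun x => Real.exp (η * f x)) (fun x _ => (Real.exp_pos _).le) (Finset.mem_univ x₀)
    calc η * M = Real.log (Real.exp (η * M)) := (Real.log_exp _).symm
      _ ≤ Real.log C := Real.log_le_log (Real.exp_pos _) hle
  have key : η * M - Real.log (Fintype.card F) ≤ η * ∑ x : F, p x * f x := by
    linarith
  calc M - 1 / η * Real.log (Fintype.card F)
      = (η * M - Real.log (Fintype.card F)) / η := by field_simp
    _ ≤ (η * ∑ x : F, p x * f x) / η := by gcongr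
    _ = ∑ x : F, p x * f x := by field_simp
end

section
/- Let W : X^n → Q be an (ε, δ)-max-KL stable algorithm outputting statistical queries q : X → [0,1]. Let P be a distribution on X and let S = (x_1, ..., x_n) be n i.i.d. samples from P. Then |E[q(P) | q = W(S)] − E[q(S) | q = W(S)]| ≤ e^ε − 1 + δ, where q(P) = E_{z∼P}[q(z)] and q(S) = (1/n)Σ_i q(x_i), and the expectation is over S and the internal randomness of W. -/
/-!
Fix a coordinate `i`. Replacing `sᵢ` by a fresh sample `x ∼ P` does not change the law of `s`,
so `E[q(sᵢ)]` for `q = W(s)` equals `E[q(x)]` for `q = W(s[i ↦ x])`, while `E[q(P)]` equals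
`E[q(z)]` for `q = W(s[i ↦ x])` and a second fresh sample `z`, that is (exchanging the names of
`x` and `z`) `E[q(x)]` for `q = W(s[i ↦ z])`. The datasets `s[i ↦ x]` and `s[i ↦ z]` are
neighbours, and by the layer-cake formula max-KL stability moves the expectation of any
`[0,1]`-valued function of the output by at most `e^ε - 1 + δ`. Averaging over `i` gives the
bound for the empirical mean.
-/

open MeasureTheory

/-- Two datasets in `X^n` are neighboring if they differ in at most one coordinate. -/
def Neighboring {X : Type*} {n : ℕ} (x x' : Fin n → X) : Prop :=
  ∃ i : Fin n, ∀ j : Fin n, j ≠ i → x j = x' j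

open ProbabilityTheory Set

lemma abs_sub_mean_le_of_forall_abs_sub_le {ι : Type*} [Fintype ι] [Nonempty ι] {a : ι → ℝ}
    {b K : ℝ} (h : ∀ i, |b - a i| ≤ K) :
    |b - (Fintype.card ι : ℝ)⁻¹ * ∑ i, a i| ≤ K := by
  have hcard : (0 : ℝ) < Fintype.card ι := by exact_mod_cast Fintype.card_pos
  have hmean : ∀ c : ℝ, (Fintype.card ι : ℝ)⁻¹ * ∑ _i : ι, c = c := fun c => by
    rw [Finset.sum_const, Finset.card_univ, nsmul_eq_mul, inv_mul_cancel_left₀ hcard.ne']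
  calc |b - (Fintype.card ι : ℝ)⁻¹ * ∑ i, a i|
      = |(Fintype.card ι : ℝ)⁻¹ * ∑ i, (b - a i)| := by
        rw [Finset.sum_sub_distrib, mul_sub, hmean]
    _ ≤ (Fintype.card ι : ℝ)⁻¹ * ∑ i, |b - a i| := by
        rw [abs_mul, abs_of_pos (inv_pos.mpr hcard)]
        gcongr
        exact Finset.abs_sum_le_sum_abs _ _
    _ ≤ (Fintype.card ι : ℝ)⁻¹ * ∑ _i : ι, K := by gcongr; exact h _
    _ = K := hmean K

section UnitIntervalValued

variable {α : Type*} [MeasurableSpace α] {μ ν : Measure α} {f g : α → ℝ}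

lemma integrable_of_forall_mem_Icc [IsFiniteMeasure μ] (hf : AEStronglyMeasurable f μ)
    (h01 : ∀ a, f a ∈ Icc (0 : ℝ) 1) : Integrable f μ :=
  .of_bound hf 1 <| .of_forall fun a => by
    rw [Real.norm_of_nonneg (h01 a).1]; exact (h01 a).2

lemma integral_mem_Icc_of_forall_mem_Icc [IsProbabilityMeasure μ]
    (h01 : ∀ a, f a ∈ Icc (0 : ℝ) 1) : ∫ a, f a ∂μ ∈ Icc (0 : ℝ) 1 := by
  have hnorm := norm_integral_le_of_norm_le_const (μ := μ) (C := 1) <| .of_forall fun a => by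
    rw [Real.norm_of_nonneg (h01 a).1]; exact (h01 a).2
  rw [probReal_univ, mul_one] at hnorm
  exact ⟨integral_nonneg fun a => (h01 a).1, (Real.le_norm_self _).trans hnorm⟩

lemma abs_integral_sub_integral_le_of_abs_sub_le [IsProbabilityMeasure μ] {K : ℝ}
    (hf : Integrable f μ) (hg : Integrable g μ) (hfg : ∀ a, |f a - g a| ≤ K) :
    |∫ a, f a ∂μ - ∫ a, g a ∂μ| ≤ K := by
  simpa [integral_sub hf hg] using
    norm_integral_le_of_norm_le_const (μ := μ) (f := f - g) (.of_forall hfg)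

lemma integral_le_mul_integral_add_of_measureReal_le [IsFiniteMeasure μ] [IsFiniteMeasure ν]
    (hf : Measurable f) (h01 : ∀ a, f a ∈ Icc (0 : ℝ) 1) {c δ : ℝ}
    (hνμ : ∀ A, MeasurableSet A → ν.real A ≤ c * μ.real A + δ) :
    ∫ a, f a ∂ν ≤ c * ∫ a, f a ∂μ + δ := by
  have layerCake : ∀ (ρ : Measure α) [IsFiniteMeasure ρ],
      ∫ a, f a ∂ρ = ∫ t in Ioc 0 1, ρ.real {a | t ≤ f a} := fun ρ _ =>
    (integrable_of_forall_mem_Icc hf.aestronglyMeasurable h01).integral_eq_integral_Ioc_meas_le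
      (.of_forall fun a => (h01 a).1) (.of_forall fun a => (h01 a).2)
  have antitone : ∀ (ρ : Measure α) [IsFiniteMeasure ρ],
      Antitone fun t : ℝ => ρ.real {a | t ≤ f a} := fun ρ _ _ _ hst =>
    measureReal_mono fun _ h => hst.trans h
  have integrableOn : ∀ (ρ : Measure α) [IsFiniteMeasure ρ],
      IntegrableOn (fun t => ρ.real {a | t ≤ f a}) (Ioc 0 1) := fun ρ _ =>
    Measure.integrableOn_of_bounded (M := ρ.real univ) measure_Ioc_lt_top.ne
      (antitone ρ).measurable.aestronglyMeasurable
      (.of_forall fun t => by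
        rw [Real.norm_of_nonneg measureReal_nonneg]; exact measureReal_mono (subset_univ _))
  rw [layerCake ν, layerCake μ, ← integral_const_mul]
  calc ∫ t in Ioc 0 1, ν.real {a | t ≤ f a}
      ≤ ∫ t in Ioc 0 1, (c * μ.real {a | t ≤ f a} + δ) :=
        setIntegral_mono_on (integrableOn ν) (((integrableOn μ).const_mul c).add
          (integrableOn_const measure_Ioc_lt_top.ne)) measurableSet_Ioc
          fun t _ => hνμ _ (hf measurableSet_Ici)
    _ = (∫ t in Ioc 0 1, c * μ.real {a | t ≤ f a}) + δ := by
        rw [integral_add ((integrableOn μ).const_mul c)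
          (integrableOn_const measure_Ioc_lt_top.ne)]
        simp

lemma abs_integral_sub_integral_le_of_measureReal_le [IsProbabilityMeasure μ]
    [IsProbabilityMeasure ν] (hf : Measurable f) (h01 : ∀ a, f a ∈ Icc (0 : ℝ) 1) {c δ : ℝ}
    (hc : 1 ≤ c) (hνμ : ∀ A, MeasurableSet A → ν.real A ≤ c * μ.real A + δ)
    (hμν : ∀ A, MeasurableSet A → μ.real A ≤ c * ν.real A + δ) :
    |∫ a, f a ∂ν - ∫ a, f a ∂μ| ≤ c - 1 + δ := by
  have hν := integral_le_mul_integral_add_of_measureReal_le hf h01 hνμ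
  have hμ := integral_le_mul_integral_add_of_measureReal_le hf h01 hμν
  have hν01 := integral_mem_Icc_of_forall_mem_Icc (μ := ν) h01
  have hμ01 := integral_mem_Icc_of_forall_mem_Icc (μ := μ) h01
  rw [abs_sub_le_iff]
  constructor <;> nlinarith [hν01.2, hμ01.2]

end UnitIntervalValued

section Resampling

variable {ι : Type*} [Fintype ι] [DecidableEq ι] {α : ι → Type*} [∀ j, MeasurableSpace (α j)]
  (μ : ∀ j, Measure (α j)) [∀ j, IsProbabilityMeasure (μ j)] (i : ι)

theorem measurePreserving_update_pi :
    MeasurePreserving (fun p : (∀ j, α j) × α i => Function.update p.1 i p.2)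
      ((Measure.pi μ).prod (μ i)) (Measure.pi μ) := by
  refine ⟨measurable_update', (Measure.pi_eq fun A hA => ?_).symm⟩
  have hpreimage : (fun p : (∀ j, α j) × α i => Function.update p.1 i p.2) ⁻¹' univ.pi A
      = univ.pi (Function.update A i univ) ×ˢ A i := by
    ext ⟨s, x⟩
    simp only [mem_preimage, mem_univ_pi, mem_prod]
    rw [Function.forall_update_iff _ fun j (y : α j) => y ∈ A j,
      Function.forall_update_iff A fun j (B : Set (α j)) => s j ∈ B]
    simp [and_comm]
  rw [Measure.map_apply measurable_update' (.univ_pi hA), hpreimage, Measure.prod_prod,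
    Measure.pi_pi, Fintype.prod_eq_mul_prod_compl i, Fintype.prod_eq_mul_prod_compl i]
  simp only [Function.update_self, measure_univ, one_mul]
  rw [mul_comm]
  congr 1
  refine Finset.prod_congr rfl fun j hj => ?_
  rw [Function.update_of_ne (by simpa using hj)]

theorem integral_pi_eq_integral_integral_update {f : (∀ j, α j) → ℝ}
    (hf : Integrable f (Measure.pi μ)) :
    ∫ s, f s ∂Measure.pi μ = ∫ s, ∫ x, f (Function.update s i x) ∂μ i ∂Measure.pi μ := by
  have hresample := measurePreserving_update_pi μ i
  have hcomp := integral_map hresample.measurable.aemeasurable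
    (hresample.map_eq.symm ▸ hf.aestronglyMeasurable)
  rw [hresample.map_eq] at hcomp
  rw [hcomp]
  exact integral_prod _ (hresample.integrable_comp_of_integrable hf)

end Resampling

section Kernel

variable {X Q : Type*} [MeasurableSpace X] [MeasurableSpace Q] (P : Measure X)
  [IsProbabilityMeasure P] {f : Q → X → ℝ} {c δ : ℝ}

lemma abs_integral_population_sub_integral_input_le (κ : Kernel X Q) [IsMarkovKernel κ]
    (hf : Measurable (Function.uncurry f)) (h01 : ∀ q z, f q z ∈ Icc (0 : ℝ) 1) (hc : 1 ≤ c)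
    (hκ : ∀ x x' A, MeasurableSet A → (κ x).real A ≤ c * (κ x').real A + δ) :
    |∫ x, ∫ q, ∫ z, f q z ∂P ∂κ x ∂P - ∫ x, ∫ q, f q x ∂κ x ∂P| ≤ c - 1 + δ := by
  set g : X → X → ℝ := fun x z => ∫ q, f q z ∂κ x
  have hg : StronglyMeasurable (Function.uncurry g) :=
    (hf.comp (measurable_snd.prodMk measurable_fst.snd)).stronglyMeasurable
      |>.integral_kernel_prod_right' (κ := κ.prodMkRight X)
  have hg01 : ∀ x z, g x z ∈ Icc (0 : ℝ) 1 := fun x z =>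
    integral_mem_Icc_of_forall_mem_Icc fun q => h01 q z
  have hpopulation : ∀ x, ∫ q, ∫ z, f q z ∂P ∂κ x = ∫ z, g x z ∂P := fun x =>
    integral_integral_swap (integrable_of_forall_mem_Icc hf.aestronglyMeasurable
      fun p => h01 p.1 p.2)
  have hswap : ∫ x, ∫ z, g x z ∂P ∂P = ∫ x, ∫ z, g z x ∂P ∂P :=
    integral_integral_swap (integrable_of_forall_mem_Icc hg.aestronglyMeasurable
      fun p => hg01 p.1 p.2)
  have hinput : ∀ x z, |g z x - g x x| ≤ c - 1 + δ := fun x z =>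
    abs_integral_sub_integral_le_of_measureReal_le hf.of_uncurry_right (fun q => h01 q x) hc
      (hκ z x) (hκ x z)
  have hswapped : StronglyMeasurable fun x => ∫ z, g z x ∂P :=
    (hg.comp_measurable measurable_swap).integral_prod_right'
  simp_rw [hpopulation]
  rw [hswap]
  refine abs_integral_sub_integral_le_of_abs_sub_le
    (integrable_of_forall_mem_Icc hswapped.aestronglyMeasurable fun x =>
      integral_mem_Icc_of_forall_mem_Icc fun z => hg01 z x)
    (integrable_of_forall_mem_Icc
      (hg.comp_measurable (measurable_id.prodMk measurable_id)).aestronglyMeasurable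
      fun x => hg01 x x) fun x => ?_
  simpa using abs_integral_sub_integral_le_of_abs_sub_le (μ := P) (g := fun _ => g x x)
    (integrable_of_forall_mem_Icc (hg.comp_measurable measurable_prodMk_right).aestronglyMeasurable
      fun z => hg01 z x) (integrable_const _) (hinput x)

lemma abs_integral_population_sub_integral_coord_le {ι : Type*} [Fintype ι] [DecidableEq ι]
    (κ : Kernel (ι → X) Q) [IsMarkovKernel κ] (hf : Measurable (Function.uncurry f))
    (h01 : ∀ q z, f q z ∈ Icc (0 : ℝ) 1) (hc : 1 ≤ c) (i : ι)
    (hκ : ∀ s x x' A, MeasurableSet A →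
      (κ (Function.update s i x)).real A ≤ c * (κ (Function.update s i x')).real A + δ) :
    |∫ s, ∫ q, ∫ z, f q z ∂P ∂κ s ∂Measure.pi (fun _ => P) -
      ∫ s, ∫ q, f q (s i) ∂κ s ∂Measure.pi (fun _ => P)| ≤ c - 1 + δ := by
  have hpopulation : StronglyMeasurable fun s => ∫ q, ∫ z, f q z ∂P ∂κ s :=
    (hf.stronglyMeasurable.integral_prod_right'.comp_measurable measurable_snd)
      |>.integral_kernel_prod_right'
  have hcoord : StronglyMeasurable fun s => ∫ q, f q (s i) ∂κ s :=
    (show Measurable fun p : (ι → X) × Q => f p.2 (p.1 i) from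
      hf.comp (measurable_snd.prodMk ((measurable_pi_apply i).comp measurable_fst)))
      |>.stronglyMeasurable.integral_kernel_prod_right'
  have hmem : ∀ s, ∫ q, ∫ z, f q z ∂P ∂κ s ∈ Icc (0 : ℝ) 1 := fun s =>
    integral_mem_Icc_of_forall_mem_Icc fun q => integral_mem_Icc_of_forall_mem_Icc (h01 q)
  rw [integral_pi_eq_integral_integral_update _ i
      (integrable_of_forall_mem_Icc hpopulation.aestronglyMeasurable hmem),
    integral_pi_eq_integral_integral_update _ i (integrable_of_forall_mem_Icc
      hcoord.aestronglyMeasurable fun s => integral_mem_Icc_of_forall_mem_Icc fun q => h01 q _)]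
  simp only [Function.update_self]
  have hresampled : StronglyMeasurable fun p : (ι → X) × X =>
      ∫ q, f q p.2 ∂κ (Function.update p.1 i p.2) :=
    (show Measurable fun r : ((ι → X) × X) × Q => f r.2 r.1.2 from
      hf.comp (measurable_snd.prodMk measurable_fst.snd))
      |>.stronglyMeasurable.integral_kernel_prod_right' (κ := κ.comap _ measurable_update')
  exact abs_integral_sub_integral_le_of_abs_sub_le
    (integrable_of_forall_mem_Icc
      (hpopulation.comp_measurable measurable_update').integral_prod_right'.aestronglyMeasurable
      fun s => integral_mem_Icc_of_forall_mem_Icc fun x => hmem _)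
    (integrable_of_forall_mem_Icc hresampled.integral_prod_right'.aestronglyMeasurable
      fun s => integral_mem_Icc_of_forall_mem_Icc fun x =>
        integral_mem_Icc_of_forall_mem_Icc fun q => h01 q x)
    fun s => abs_integral_population_sub_integral_input_le P
      (κ.comap (Function.update s i) (measurable_update s)) hf h01 hc (hκ s)

end Kernel

lemma integral_integral_const_mul_sum {ι α β : Type*} [Fintype ι] [MeasurableSpace α]
    [MeasurableSpace β] (μ : Measure α) [IsFiniteMeasure μ] (κ : Kernel α β) [IsMarkovKernel κ]
    (r : ℝ) {F : ι → α × β → ℝ} (hF : ∀ i, Measurable (F i))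
    (h01 : ∀ i p, F i p ∈ Icc (0 : ℝ) 1) :
    ∫ a, ∫ b, r * ∑ i, F i (a, b) ∂κ a ∂μ = r * ∑ i, ∫ a, ∫ b, F i (a, b) ∂κ a ∂μ := by
  have hinner : ∀ a, ∫ b, r * ∑ i, F i (a, b) ∂κ a = r * ∑ i, ∫ b, F i (a, b) ∂κ a :=
    fun a => by
      rw [integral_const_mul, integral_finsetSum]
      exact fun i _ => integrable_of_forall_mem_Icc
        ((hF i).comp measurable_prodMk_left).aestronglyMeasurable fun b => h01 i _
  simp_rw [hinner]
  rw [integral_const_mul, integral_finsetSum _ fun i _ => integrable_of_forall_mem_Icc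
    (hF i).stronglyMeasurable.integral_kernel_prod_right'.aestronglyMeasurable
    fun a => integral_mem_Icc_of_forall_mem_Icc fun b => h01 i _]

theorem single_sample_decorrelated_expectation_SQ_general
    {X Q : Type*} [MeasurableSpace X] [MeasurableSpace Q] {n : ℕ} (hn : 0 < n)
    (P : Measure X) [IsProbabilityMeasure P]
    (W : (Fin n → X) → Measure Q) (hWprob : ∀ s, IsProbabilityMeasure (W s))
    (hWmeas : Measurable W)
    (eval : Q → X → ℝ) (hmeas : Measurable fun p : Q × X => eval p.1 p.2)
    (hrange : ∀ q z, eval q z ∈ Set.Icc (0 : ℝ) 1)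
    (ε δ : ℝ) (hε : 0 ≤ ε)
    (hstable : ∀ s s' : Fin n → X, Neighboring s s' → ∀ S : Set Q, MeasurableSet S →
      ((W s) S).toReal ≤ Real.exp ε * ((W s') S).toReal + δ) :
    |(∫ s, ∫ q, (∫ z, eval q z ∂P) ∂(W s) ∂(Measure.pi fun _ : Fin n => P)) -
      (∫ s, ∫ q, ((n : ℝ)⁻¹ * ∑ i : Fin n, eval q (s i)) ∂(W s)
        ∂(Measure.pi fun _ : Fin n => P))| ≤ Real.exp ε - 1 + δ := by
  obtain ⟨κ, rfl⟩ : ∃ κ : Kernel (Fin n → X) Q, ⇑κ = W := ⟨⟨W, hWmeas⟩, rfl⟩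
  have : IsMarkovKernel κ := ⟨hWprob⟩
  have : Nonempty (Fin n) := ⟨⟨0, hn⟩⟩
  have hcoord_stable : ∀ i s x x' A, MeasurableSet A → (κ (Function.update s i x)).real A ≤
      Real.exp ε * (κ (Function.update s i x')).real A + δ := fun i s x x' =>
    hstable _ _ ⟨i, fun j hj => by simp only [Function.update_of_ne hj]⟩
  have hcoord_meas : ∀ i, Measurable fun p : (Fin n → X) × Q => eval p.2 (p.1 i) := fun i =>
    hmeas.comp (measurable_snd.prodMk ((measurable_pi_apply i).comp measurable_fst))
  rw [integral_integral_const_mul_sum _ κ _ hcoord_meas fun i p => hrange _ _]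
  have hmean := abs_sub_mean_le_of_forall_abs_sub_le fun i =>
    abs_integral_population_sub_integral_coord_le P κ hmeas hrange (Real.one_le_exp hε) i
      (hcoord_stable i)
  rwa [Fintype.card_fin] at hmean

/-- Single-sample de-correlated expectation lemma for statistical queries:
if `W` is an (ε,δ)-max-KL stable algorithm outputting statistical queries
(`eval q : X → [0,1]`), and `S ∼ Pⁿ`, then the expected population value and
the expected empirical value of the output query differ by at most `e^ε − 1 + δ`. -/
theorem single_sample_decorrelated_expectation_SQ
    {X Q : Type*} [MeasurableSpace X] [MeasurableSpace Q] {n : ℕ} (hn : 0 < n)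
    (P : Measure X) [IsProbabilityMeasure P]
    (W : (Fin n → X) → Measure Q) (hWprob : ∀ s, IsProbabilityMeasure (W s))
    (hWmeas : Measurable W)
    (eval : Q → X → ℝ) (hmeas : Measurable fun p : Q × X => eval p.1 p.2)
    (hrange : ∀ q z, eval q z ∈ Set.Icc (0 : ℝ) 1)
    (ε δ : ℝ) (hε : 0 ≤ ε) (hδ : 0 ≤ δ)
    (hstable : ∀ s s' : Fin n → X, Neighboring s s' → ∀ S : Set Q, MeasurableSet S →
      ((W s) S).toReal ≤ Real.exp ε * ((W s') S).toReal + δ) :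
    |(∫ s, ∫ q, (∫ z, eval q z ∂P) ∂(W s) ∂(Measure.pi fun _ : Fin n => P)) -
      (∫ s, ∫ q, ((n : ℝ)⁻¹ * ∑ i : Fin n, eval q (s i)) ∂(W s)
        ∂(Measure.pi fun _ : Fin n => P))| ≤ Real.exp ε - 1 + δ :=
  single_sample_decorrelated_expectation_SQ_general hn P W hWprob hWmeas eval hmeas hrange ε δ hε
    hstable
end

section
/- Let W : (X^n)^T → Q × [T] be an (ε, δ)-max-KL stable algorithm where Q is the class of statistical queries q : X → [0,1]. Let P be a distribution on X and X = (S_1, ..., S_T) consist of T independent samples each of n i.i.d. draws from P. Then |E[q(P) | (q,t) = W(X)] − E[q(S_t) | (q,t) = W(X)]| ≤ e^ε − 1 + Tδ. -/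
/-!
Fix a sample index `i`, and write `selectedEval W eval t x z` for the expected value at `z` of
the query output by `W x`, restricted to the event that the output index is `t`. The population
value is `∑ t, E[selectedEval t x z]` for a fresh sample `z ∼ P`, and the `i`-th in-sample value
is `∑ t, E[selectedEval t x (x t i)]`. Exchanging `z` with the entry `x t i` preserves the joint
law of `(x, z)` and replaces `x` by a neighbouring collection, so max-KL stability, extended from
events to `[0, 1]`-valued functions by the layer-cake formula, bounds each term of either sum by
`e^ε` times the matching term of the other plus `δ`. Both sums lie in `[0, 1]`, hence differ by at
most `e^ε - 1 + T δ`; averaging over `i` gives the theorem.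
-/

open MeasureTheory

/-- Two collections of `T` datasets of size `n` are neighboring if they differ
in at most one entry of one dataset. -/
def NeighboringMulti {X : Type*} {n T : ℕ} (x x' : Fin T → Fin n → X) : Prop :=
  ∃ t : Fin T, ∃ i : Fin n, ∀ t' : Fin T, ∀ i' : Fin n,
    (t', i') ≠ (t, i) → x t' i' = x' t' i'

open ProbabilityTheory Set

theorem abs_sub_le_of_le_mul_add {a b c d : ℝ} (ha : a ≤ 1) (hb : b ≤ 1) (hc : 1 ≤ c)
    (hab : a ≤ c * b + d) (hba : b ≤ c * a + d) : |a - b| ≤ c - 1 + d := by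
  rw [abs_le]
  constructor <;> nlinarith

theorem sum_le_mul_sum_add_card_mul {ι : Type*} [Fintype ι] {f g : ι → ℝ} {c d : ℝ}
    (h : ∀ t, f t ≤ c * g t + d) : ∑ t, f t ≤ c * ∑ t, g t + Fintype.card ι * d := by
  calc ∑ t, f t ≤ ∑ t, (c * g t + d) := Finset.sum_le_sum fun t _ => h t
    _ = c * ∑ t, g t + Fintype.card ι * d := by
      rw [Finset.sum_add_distrib, Finset.mul_sum, Finset.sum_const, nsmul_eq_mul,
        Finset.card_univ]

theorem abs_sub_mean_le {ι : Type*} [Fintype ι] [Nonempty ι] {a K : ℝ} {b : ι → ℝ}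
    (h : ∀ i, |a - b i| ≤ K) : |a - (Fintype.card ι : ℝ)⁻¹ * ∑ i, b i| ≤ K := by
  have hcard : (0 : ℝ) < Fintype.card ι := Nat.cast_pos.mpr Fintype.card_pos
  have hmean : a - (Fintype.card ι : ℝ)⁻¹ * ∑ i, b i
      = (Fintype.card ι : ℝ)⁻¹ * ∑ i, (a - b i) := by
    rw [Finset.sum_sub_distrib, Finset.sum_const, Finset.card_univ, nsmul_eq_mul]
    field_simp
  calc |a - (Fintype.card ι : ℝ)⁻¹ * ∑ i, b i|
      ≤ (Fintype.card ι : ℝ)⁻¹ * ∑ i, |a - b i| := by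
        rw [hmean, abs_mul, abs_of_pos (inv_pos.mpr hcard)]
        gcongr
        exact Finset.abs_sum_le_sum_abs _ _
    _ ≤ (Fintype.card ι : ℝ)⁻¹ * ∑ _i : ι, K := by gcongr with i; exact h i
    _ = K := by
      rw [Finset.sum_const, Finset.card_univ, nsmul_eq_mul]
      field_simp

theorem integral_mem_Icc_zero_one {α : Type*} [MeasurableSpace α] {μ : Measure α}
    [IsProbabilityMeasure μ] {f : α → ℝ} (hf : ∀ a, f a ∈ Icc 0 1) :
    ∫ a, f a ∂μ ∈ Icc 0 1 :=
  ⟨integral_nonneg fun a => (hf a).1, by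
    simpa using integral_mono_of_nonneg (μ := μ) (ae_of_all _ fun a => (hf a).1)
      (integrable_const 1) (ae_of_all _ fun a => (hf a).2)⟩

theorem integral_le_mul_integral_add_of_le {α : Type*} [MeasurableSpace α] {μ : Measure α}
    [IsProbabilityMeasure μ] {f g : α → ℝ} (hf : Integrable f μ) (hg : Integrable g μ)
    {c d : ℝ} (h : ∀ a, f a ≤ c * g a + d) : ∫ a, f a ∂μ ≤ c * ∫ a, g a ∂μ + d :=
  calc ∫ a, f a ∂μ ≤ ∫ a, (c * g a + d) ∂μ :=
        integral_mono hf ((hg.const_mul c).add (integrable_const d)) h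
    _ = c * ∫ a, g a ∂μ + d := by
        rw [integral_add (hg.const_mul c) (integrable_const d), integral_const_mul]
        simp

theorem MeasureTheory.MeasurePreserving.integral_comp_of_measurable {α β : Type*}
    [MeasurableSpace α] [MeasurableSpace β] {μ : Measure α} {ν : Measure β} {φ : α → β}
    (hφ : MeasurePreserving φ μ ν) {f : β → ℝ} (hf : Measurable f) :
    ∫ a, f (φ a) ∂μ = ∫ b, f b ∂ν := by
  rw [← integral_map hφ.measurable.aemeasurable (hφ.map_eq ▸ hf.aestronglyMeasurable),
    hφ.map_eq]

theorem integral_eq_integral_Ioc_measureReal_lt {Ω : Type*} [MeasurableSpace Ω] {μ : Measure Ω}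
    [IsFiniteMeasure μ] {g : Ω → ℝ} (hg : Measurable g) (hg01 : ∀ ω, g ω ∈ Icc 0 1) :
    ∫ ω, g ω ∂μ = ∫ s in Ioc 0 1, μ.real {ω | s < g ω} := by
  rw [(Integrable.of_mem_Icc 0 1 hg.aemeasurable (ae_of_all _ hg01)).integral_eq_integral_meas_lt
    (ae_of_all _ fun ω => (hg01 ω).1)]
  refine setIntegral_eq_of_subset_of_forall_sdiff_eq_zero measurableSet_Ioi Ioc_subset_Ioi_self
    fun s hs => ?_
  have hs1 : 1 < s := lt_of_not_ge fun h => hs.2 ⟨hs.1, h⟩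
  have : {ω | s < g ω} = ∅ := eq_empty_of_forall_notMem fun ω (hω : s < g ω) => by
    linarith [(hg01 ω).2]
  simp [this]

theorem integrableOn_Ioc_measureReal_lt {Ω : Type*} [MeasurableSpace Ω] (μ : Measure Ω)
    [IsFiniteMeasure μ] (g : Ω → ℝ) :
    IntegrableOn (fun s : ℝ => μ.real {ω | s < g ω}) (Ioc 0 1) := by
  have hanti : Antitone fun s : ℝ => μ.real {ω | s < g ω} :=
    fun _ _ hst => measureReal_mono fun _ h => lt_of_le_of_lt hst h
  exact (hanti.antitoneOn _).integrableOn_isCompact isCompact_Icc |>.mono_set Ioc_subset_Icc_self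

theorem integral_le_mul_integral_add_of_measureReal_le_s9 {Ω : Type*} [MeasurableSpace Ω]
    {μ₁ μ₂ : Measure Ω} [IsFiniteMeasure μ₁] [IsFiniteMeasure μ₂] {c δ : ℝ}
    (h : ∀ S, MeasurableSet S → μ₁.real S ≤ c * μ₂.real S + δ) {g : Ω → ℝ}
    (hg : Measurable g) (hg01 : ∀ ω, g ω ∈ Icc 0 1) :
    ∫ ω, g ω ∂μ₁ ≤ c * ∫ ω, g ω ∂μ₂ + δ := by
  have hint₂ := integrableOn_Ioc_measureReal_lt μ₂ g
  have hδ : IntegrableOn (fun _ : ℝ => δ) (Ioc 0 1) := integrableOn_const (by simp)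
  rw [integral_eq_integral_Ioc_measureReal_lt hg hg01,
    integral_eq_integral_Ioc_measureReal_lt hg hg01]
  calc ∫ s in Ioc 0 1, μ₁.real {ω | s < g ω}
      ≤ ∫ s in Ioc 0 1, (c * μ₂.real {ω | s < g ω} + δ) :=
        setIntegral_mono_on (integrableOn_Ioc_measureReal_lt μ₁ g)
          ((hint₂.const_mul c).add hδ) measurableSet_Ioc fun s _ => h _ (hg measurableSet_Ioi)
    _ = c * (∫ s in Ioc 0 1, μ₂.real {ω | s < g ω}) + δ := by
        rw [integral_add (hint₂.const_mul c) hδ, integral_const_mul]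
        simp

theorem MeasureTheory.MeasurePreserving.pi_update {m : ℕ} {α : Fin m → Type*}
    [∀ i, MeasurableSpace (α i)] (μ : ∀ i, Measure (α i)) [∀ i, SigmaFinite (μ i)]
    {γ : Type*} [MeasurableSpace γ] (ν : Measure γ) [SigmaFinite ν] (j : Fin m)
    {ψ : α j × γ → α j × γ}
    (hψ : MeasurePreserving ψ ((μ j).prod ν) ((μ j).prod ν)) :
    MeasurePreserving
      (fun p : (∀ i, α i) × γ =>
        (Function.update p.1 j (ψ (p.1 j, p.2)).1, (ψ (p.1 j, p.2)).2))
      ((Measure.pi μ).prod ν) ((Measure.pi μ).prod ν) := by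
  cases m with
  | zero => exact j.elim0
  | succ k =>
    let E : (∀ i, α i) × γ ≃ᵐ (α j × γ) × (∀ i, α (j.succAbove i)) :=
      ((MeasurableEquiv.prodCongr (MeasurableEquiv.piFinSuccAbove α j) (.refl γ)).trans
        MeasurableEquiv.prodAssoc).trans
        ((MeasurableEquiv.prodCongr (.refl _) MeasurableEquiv.prodComm).trans
          MeasurableEquiv.prodAssoc.symm)
    have hE : MeasurePreserving E ((Measure.pi μ).prod ν)
        (((μ j).prod ν).prod (Measure.pi fun i => μ (j.succAbove i))) :=
      (((measurePreserving_piFinSuccAbove μ j).prod (.id ν)).trans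
        (measurePreserving_prodAssoc _ _ _)).trans
        (((MeasurePreserving.id _).prod Measure.measurePreserving_swap).trans
          (measurePreserving_prodAssoc _ _ _).symm)
    convert (hE.symm E).comp ((hψ.prod (.id _)).comp hE) using 1
    funext ⟨x, z⟩
    exact Prod.ext (Fin.insertNth_removeNth j _ x).symm rfl

theorem integrable_eval_comp {X Q ι : Type*} [MeasurableSpace X] [MeasurableSpace Q]
    [MeasurableSpace ι] [MeasurableSingletonClass ι] [Finite ι] {eval : Q → X → ℝ}
    {μ : Measure (Q × ι)} [IsFiniteMeasure μ]
    (heval : Measurable fun p : Q × X => eval p.1 p.2)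
    (hrange : ∀ q z, eval q z ∈ Icc (0 : ℝ) 1) (y : ι → X) :
    Integrable (fun qs : Q × ι => eval qs.1 (y qs.2)) μ :=
  have hmeas : Measurable fun qs : Q × ι => eval qs.1 (y qs.2) :=
    heval.comp (measurable_fst.prodMk ((measurable_of_finite y).comp measurable_snd))
  .of_mem_Icc 0 1 hmeas.aemeasurable (ae_of_all _ fun _ => hrange _ _)

section SelectedEval

variable {Ω X Q ι : Type*} [DecidableEq ι] {eval : Q → X → ℝ}

theorem ite_eval_mem_Icc (hrange : ∀ q z, eval q z ∈ Icc (0 : ℝ) 1) (t : ι) (z : X)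
    (qs : Q × ι) : (if qs.2 = t then eval qs.1 z else 0) ∈ Icc 0 1 := by
  split_ifs
  exacts [hrange _ _, ⟨le_rfl, zero_le_one⟩]

variable [MeasurableSpace Q] [MeasurableSpace ι]

noncomputable def selectedEval (W : Ω → Measure (Q × ι)) (eval : Q → X → ℝ) (t : ι)
    (x : Ω) (z : X) : ℝ :=
  ∫ qs, if qs.2 = t then eval qs.1 z else 0 ∂W x

variable {W : Ω → Measure (Q × ι)}

theorem selectedEval_mem_Icc (hrange : ∀ q z, eval q z ∈ Icc (0 : ℝ) 1) (t : ι) (x : Ω)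
    [IsProbabilityMeasure (W x)] (z : X) :
    selectedEval W eval t x z ∈ Icc 0 1 :=
  integral_mem_Icc_zero_one (ite_eval_mem_Icc hrange t z)

variable [MeasurableSpace X] [MeasurableSingletonClass ι]

theorem measurable_ite_eval (heval : Measurable fun p : Q × X => eval p.1 p.2) (t : ι) :
    Measurable fun p : (Q × ι) × X => if p.1.2 = t then eval p.1.1 p.2 else 0 :=
  Measurable.ite (measurable_fst.snd (measurableSet_singleton t))
    (heval.comp (measurable_fst.fst.prodMk measurable_snd)) measurable_const

theorem integrable_ite_eval {μ : Measure (Q × ι)} [IsFiniteMeasure μ]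
    (heval : Measurable fun p : Q × X => eval p.1 p.2)
    (hrange : ∀ q z, eval q z ∈ Icc (0 : ℝ) 1) (t : ι) (z : X) :
    Integrable (fun qs : Q × ι => if qs.2 = t then eval qs.1 z else 0) μ :=
  .of_mem_Icc 0 1
    ((measurable_ite_eval heval t).comp (measurable_id.prodMk measurable_const)).aemeasurable
    (ae_of_all _ (ite_eval_mem_Icc hrange t z))

theorem integral_eval_eq_sum_selectedEval [Fintype ι]
    (heval : Measurable fun p : Q × X => eval p.1 p.2)
    (hrange : ∀ q z, eval q z ∈ Icc (0 : ℝ) 1)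
    (x : Ω) [IsFiniteMeasure (W x)] (y : ι → X) :
    ∫ qs, eval qs.1 (y qs.2) ∂W x = ∑ t, selectedEval W eval t x (y t) := by
  simp only [selectedEval]
  rw [← integral_finsetSum _ fun t _ => integrable_ite_eval heval hrange t (y t)]
  congr 1 with qs
  simp

theorem sum_selectedEval_mem_Icc [Fintype ι]
    (heval : Measurable fun p : Q × X => eval p.1 p.2)
    (hrange : ∀ q z, eval q z ∈ Icc (0 : ℝ) 1)
    (x : Ω) [IsProbabilityMeasure (W x)] (y : ι → X) :
    ∑ t, selectedEval W eval t x (y t) ∈ Icc 0 1 := by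
  rw [← integral_eval_eq_sum_selectedEval heval hrange]
  exact integral_mem_Icc_zero_one fun qs => hrange _ _

theorem selectedEval_le_of_measureReal_le (heval : Measurable fun p : Q × X => eval p.1 p.2)
    (hrange : ∀ q z, eval q z ∈ Icc (0 : ℝ) 1) {x x' : Ω} [IsFiniteMeasure (W x)]
    [IsFiniteMeasure (W x')] {c δ : ℝ}
    (h : ∀ S, MeasurableSet S → (W x).real S ≤ c * (W x').real S + δ) (t : ι) (z : X) :
    selectedEval W eval t x z ≤ c * selectedEval W eval t x' z + δ :=
  integral_le_mul_integral_add_of_measureReal_le_s9 h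
    ((measurable_ite_eval heval t).comp (measurable_id.prodMk measurable_const))
    (ite_eval_mem_Icc hrange t z)

variable [MeasurableSpace Ω] [∀ x, IsProbabilityMeasure (W x)]

theorem measurable_selectedEval (hW : Measurable W)
    (heval : Measurable fun p : Q × X => eval p.1 p.2) (t : ι) :
    Measurable fun p : Ω × X => selectedEval W eval t p.1 p.2 := by
  let κ : Kernel Ω (Q × ι) := ⟨W, hW⟩
  have : IsMarkovKernel κ := ⟨inferInstanceAs (∀ x, IsProbabilityMeasure (W x))⟩
  exact ((measurable_ite_eval heval t).comp (measurable_snd.prodMk measurable_fst.snd)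
    ).stronglyMeasurable.integral_kernel_prod_right' (κ := κ.comap Prod.fst measurable_fst)
    |>.measurable

theorem integral_integral_eval_eq_sum_integral_selectedEval [Fintype ι] (hW : Measurable W)
    (heval : Measurable fun p : Q × X => eval p.1 p.2)
    (hrange : ∀ q z, eval q z ∈ Icc (0 : ℝ) 1)
    (μ : Measure Ω) [IsFiniteMeasure μ] (P : Measure X) [IsFiniteMeasure P] :
    ∫ x, ∫ qs, (∫ z, eval qs.1 z ∂P) ∂W x ∂μ
      = ∑ t, ∫ p, selectedEval W eval t p.1 p.2 ∂(μ.prod P) := by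
  have hint : ∀ t, Integrable (fun p : Ω × X => selectedEval W eval t p.1 p.2) (μ.prod P) :=
    fun t => .of_mem_Icc 0 1 (measurable_selectedEval hW heval t).aemeasurable
      (ae_of_all _ fun p => selectedEval_mem_Icc hrange t p.1 p.2)
  calc ∫ x, ∫ qs, (∫ z, eval qs.1 z ∂P) ∂W x ∂μ
      = ∫ x, ∫ z, ∑ t, selectedEval W eval t x z ∂P ∂μ := by
        congr 1 with x
        rw [integral_integral_swap]
        · simp only [← integral_eval_eq_sum_selectedEval heval hrange x fun _ => _]
        · exact Integrable.of_mem_Icc 0 1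
            (heval.comp (measurable_fst.fst.prodMk measurable_snd)).aemeasurable
            (ae_of_all _ fun p => hrange _ _)
    _ = ∫ p, ∑ t, selectedEval W eval t p.1 p.2 ∂(μ.prod P) :=
        (integral_prod _ (integrable_finsetSum _ fun t _ => hint t)).symm
    _ = ∑ t, ∫ p, selectedEval W eval t p.1 p.2 ∂(μ.prod P) :=
        integral_finsetSum _ fun t _ => hint t

end SelectedEval

section Datasets

variable {X : Type*} {n T : ℕ}

def swapEntry (t : Fin T) (i : Fin n) (p : (Fin T → Fin n → X) × X) :
    (Fin T → Fin n → X) × X :=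
  (Function.update p.1 t (Function.update (p.1 t) i p.2), p.1 t i)

theorem NeighboringMulti.symm {x x' : Fin T → Fin n → X} (h : NeighboringMulti x x') :
    NeighboringMulti x' x :=
  let ⟨t, i, h⟩ := h
  ⟨t, i, fun t' i' hne => (h t' i' hne).symm⟩

theorem neighboringMulti_swapEntry (t : Fin T) (i : Fin n) (p : (Fin T → Fin n → X) × X) :
    NeighboringMulti (swapEntry t i p).1 p.1 := by
  refine ⟨t, i, fun t' i' hne => ?_⟩
  rcases eq_or_ne t' t with rfl | ht
  · have hi : i' ≠ i := fun h => hne (by rw [h])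
    simp [swapEntry, Function.update_of_ne hi]
  · simp [swapEntry, Function.update_of_ne ht]

variable [MeasurableSpace X]

noncomputable abbrev iidDatasets (P : Measure X) (T n : ℕ) : Measure (Fin T → Fin n → X) :=
  Measure.pi fun _ => Measure.pi fun _ => P

theorem measurePreserving_swapEntry (P : Measure X) [SigmaFinite P] (t : Fin T) (i : Fin n) :
    MeasurePreserving (swapEntry t i) ((iidDatasets P T n).prod P) ((iidDatasets P T n).prod P) :=
  (Measure.measurePreserving_swap.pi_update (fun _ => P) P i).pi_update
    (fun _ => Measure.pi fun _ => P) P t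

end Datasets

section Decorrelation

variable {X Q : Type*} [MeasurableSpace X] [MeasurableSpace Q] {n T : ℕ}
  {W : (Fin T → Fin n → X) → Measure (Q × Fin T)} [∀ x, IsProbabilityMeasure (W x)]
  {eval : Q → X → ℝ}

theorem integral_integral_mean_eval_eq_sum_selectedEval (hW : Measurable W)
    (heval : Measurable fun p : Q × X => eval p.1 p.2)
    (hrange : ∀ q z, eval q z ∈ Icc (0 : ℝ) 1)
    (μ : Measure (Fin T → Fin n → X)) [IsFiniteMeasure μ] :
    ∫ x, ∫ qs, ((n : ℝ)⁻¹ * ∑ i, eval qs.1 (x qs.2 i)) ∂W x ∂μ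
      = (n : ℝ)⁻¹ * ∑ i, ∑ t, ∫ x, selectedEval W eval t x (x t i) ∂μ := by
  have hint : ∀ i t, Integrable (fun x => selectedEval W eval t x (x t i)) μ := fun i t =>
    Integrable.of_mem_Icc 0 1 ((measurable_selectedEval hW heval t).comp (measurable_id.prodMk
      ((measurable_pi_apply i).comp (measurable_pi_apply t)))).aemeasurable
      (ae_of_all _ fun x => selectedEval_mem_Icc hrange t x _)
  calc ∫ x, ∫ qs, ((n : ℝ)⁻¹ * ∑ i, eval qs.1 (x qs.2 i)) ∂W x ∂μ
      = ∫ x, (n : ℝ)⁻¹ * ∑ i, ∑ t, selectedEval W eval t x (x t i) ∂μ := by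
        congr 1 with x
        rw [integral_const_mul,
          integral_finsetSum _ fun i _ => integrable_eval_comp heval hrange fun t => x t i]
        exact congrArg _ (Finset.sum_congr rfl fun i _ =>
          integral_eval_eq_sum_selectedEval heval hrange x fun t => x t i)
    _ = (n : ℝ)⁻¹ * ∑ i, ∑ t, ∫ x, selectedEval W eval t x (x t i) ∂μ := by
        rw [integral_const_mul, integral_finsetSum _ fun i _ => integrable_finsetSum _ fun t _ =>
          hint i t]
        simp only [integral_finsetSum _ fun t _ => hint _ t]

variable {P : Measure X} [IsProbabilityMeasure P]

theorem abs_sum_integral_selectedEval_sub_le (hW : Measurable W)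
    (heval : Measurable fun p : Q × X => eval p.1 p.2)
    (hrange : ∀ q z, eval q z ∈ Icc (0 : ℝ) 1)
    {ε δ : ℝ} (hε : 0 ≤ ε)
    (hstable : ∀ x x', NeighboringMulti x x' → ∀ S, MeasurableSet S →
      (W x).real S ≤ Real.exp ε * (W x').real S + δ) (i : Fin n) :
    |∑ t, ∫ p, selectedEval W eval t p.1 p.2 ∂(iidDatasets P T n).prod P
        - ∑ t, ∫ x, selectedEval W eval t x (x t i) ∂iidDatasets P T n|
      ≤ Real.exp ε - 1 + T * δ := by
  set μ := iidDatasets P T n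
  let M : Fin T → (Fin T → Fin n → X) × X → ℝ := fun t p => selectedEval W eval t p.1 p.2
  show |∑ t, ∫ p, M t p ∂μ.prod P - ∑ t, ∫ x, M t (x, x t i) ∂μ| ≤ _
  have hM : ∀ t, Measurable (M t) := measurable_selectedEval hW heval
  have hM01 : ∀ t p, M t p ∈ Icc 0 1 := fun t p => selectedEval_mem_Icc hrange t p.1 p.2
  have hint : ∀ t {φ : (Fin T → Fin n → X) × X → (Fin T → Fin n → X) × X},
      Measurable φ → Integrable (fun p => M t (φ p)) (μ.prod P) := fun t _ hφ =>
    Integrable.of_mem_Icc 0 1 ((hM t).comp hφ).aemeasurable (ae_of_all _ fun _ => hM01 t _)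
  have hinSample : ∀ t, Measurable fun p : (Fin T → Fin n → X) × X => (p.1, p.1 t i) :=
    fun t => measurable_fst.prodMk
      ((measurable_pi_apply i).comp ((measurable_pi_apply t).comp measurable_fst))
  have hswap : ∀ t : Fin T, Measurable (swapEntry (X := X) t i) := fun t =>
    (measurePreserving_swapEntry P t i).measurable
  have hfresh : ∀ t, ∫ p, M t p ∂μ.prod P = ∫ p, M t (swapEntry t i p) ∂μ.prod P :=
    fun t =>
    ((measurePreserving_swapEntry P t i).integral_comp_of_measurable (hM t)).symm
  have hfst : ∀ t, ∫ x, M t (x, x t i) ∂μ = ∫ p, M t (p.1, p.1 t i) ∂μ.prod P :=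
    fun t => by
      simp [integral_fun_fst fun x => M t (x, x t i)]
  have hle : ∀ t, ∫ p, M t (swapEntry t i p) ∂μ.prod P
      ≤ Real.exp ε * ∫ p, M t (p.1, p.1 t i) ∂μ.prod P + δ := fun t =>
    integral_le_mul_integral_add_of_le (hint t (hswap t)) (hint t (hinSample t)) fun p =>
      selectedEval_le_of_measureReal_le heval hrange
        (hstable _ _ (neighboringMulti_swapEntry t i p)) t _
  have hge : ∀ t, ∫ p, M t (p.1, p.1 t i) ∂μ.prod P
      ≤ Real.exp ε * ∫ p, M t (swapEntry t i p) ∂μ.prod P + δ := fun t =>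
    integral_le_mul_integral_add_of_le (hint t (hinSample t)) (hint t (hswap t)) fun p =>
      selectedEval_le_of_measureReal_le heval hrange
        (hstable _ _ (neighboringMulti_swapEntry t i p).symm) t _
  have hfresh_le : ∑ t, ∫ p, M t p ∂μ.prod P ≤ 1 := by
    rw [← integral_finsetSum (f := M) _ fun t _ => hint t measurable_id]
    exact (integral_mem_Icc_zero_one fun p : (Fin T → Fin n → X) × X =>
      sum_selectedEval_mem_Icc heval hrange p.1 fun _ => p.2).2
  have hinSample_le : ∑ t, ∫ x, M t (x, x t i) ∂μ ≤ 1 := by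
    rw [Finset.sum_congr rfl fun t _ => hfst t,
      ← integral_finsetSum _ fun t _ => hint t (hinSample t)]
    exact (integral_mem_Icc_zero_one fun p : (Fin T → Fin n → X) × X =>
      sum_selectedEval_mem_Icc heval hrange p.1 fun t => p.1 t i).2
  rw [Finset.sum_congr rfl fun t _ => hfresh t] at hfresh_le ⊢
  rw [Finset.sum_congr rfl fun t _ => hfst t] at hinSample_le ⊢
  simpa using abs_sub_le_of_le_mul_add hfresh_le hinSample_le (Real.one_le_exp hε)
    (sum_le_mul_sum_add_card_mul hle) (sum_le_mul_sum_add_card_mul hge)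

end Decorrelation

theorem multi_sample_decorrelated_expectation_SQ_general
    {X Q : Type*} [MeasurableSpace X] [MeasurableSpace Q] {n T : ℕ}
    (hn : 0 < n)
    (P : Measure X) [IsProbabilityMeasure P]
    (W : (Fin T → Fin n → X) → Measure (Q × Fin T))
    (hWprob : ∀ x, IsProbabilityMeasure (W x)) (hWmeas : Measurable W)
    (eval : Q → X → ℝ) (hmeas : Measurable fun p : Q × X => eval p.1 p.2)
    (hrange : ∀ q z, eval q z ∈ Set.Icc (0 : ℝ) 1)
    (ε δ : ℝ) (hε : 0 ≤ ε)
    (hstable : ∀ x x' : Fin T → Fin n → X, NeighboringMulti x x' →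
      ∀ S : Set (Q × Fin T), MeasurableSet S →
        ((W x) S).toReal ≤ Real.exp ε * ((W x') S).toReal + δ) :
    |(∫ x, ∫ qt : Q × Fin T, (∫ z, eval qt.1 z ∂P) ∂(W x)
        ∂(Measure.pi fun _ : Fin T => Measure.pi fun _ : Fin n => P)) -
      (∫ x, ∫ qt : Q × Fin T, ((n : ℝ)⁻¹ * ∑ i : Fin n, eval qt.1 (x qt.2 i)) ∂(W x)
        ∂(Measure.pi fun _ : Fin T => Measure.pi fun _ : Fin n => P))|
      ≤ Real.exp ε - 1 + T * δ := by
  have : Nonempty (Fin n) := ⟨⟨0, hn⟩⟩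
  rw [integral_integral_eval_eq_sum_integral_selectedEval hWmeas hmeas hrange,
    integral_integral_mean_eval_eq_sum_selectedEval hWmeas hmeas hrange]
  simpa using abs_sub_mean_le fun i =>
    abs_sum_integral_selectedEval_sub_le hWmeas hmeas hrange hε hstable i

/-- Multi-sample de-correlated expectation lemma for statistical queries:
an (ε,δ)-max-KL stable algorithm taking `T` datasets of `n` i.i.d. samples from `P`
and outputting a statistical query `q` together with an index `t` satisfies
`|E[q(P)] − E[q(S_t)]| ≤ e^ε − 1 + T·δ`. -/
theorem multi_sample_decorrelated_expectation_SQ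
    {X Q : Type*} [MeasurableSpace X] [MeasurableSpace Q] {n T : ℕ}
    (hn : 0 < n) (hT : 0 < T)
    (P : Measure X) [IsProbabilityMeasure P]
    (W : (Fin T → Fin n → X) → Measure (Q × Fin T))
    (hWprob : ∀ x, IsProbabilityMeasure (W x)) (hWmeas : Measurable W)
    (eval : Q → X → ℝ) (hmeas : Measurable fun p : Q × X => eval p.1 p.2)
    (hrange : ∀ q z, eval q z ∈ Set.Icc (0 : ℝ) 1)
    (ε δ : ℝ) (hε : 0 ≤ ε) (hδ : 0 ≤ δ)
    (hstable : ∀ x x' : Fin T → Fin n → X, NeighboringMulti x x' →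
      ∀ S : Set (Q × Fin T), MeasurableSet S →
        ((W x) S).toReal ≤ Real.exp ε * ((W x') S).toReal + δ) :
    |(∫ x, ∫ qt : Q × Fin T, (∫ z, eval qt.1 z ∂P) ∂(W x)
        ∂(Measure.pi fun _ : Fin T => Measure.pi fun _ : Fin n => P)) -
      (∫ x, ∫ qt : Q × Fin T, ((n : ℝ)⁻¹ * ∑ i : Fin n, eval qt.1 (x qt.2 i)) ∂(W x)
        ∂(Measure.pi fun _ : Fin T => Measure.pi fun _ : Fin n => P))|
      ≤ Real.exp ε - 1 + T * δ :=
  multi_sample_decorrelated_expectation_SQ_general hn P W hWprob hWmeas eval hmeas hrange ε δ hε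
    hstable
end

section
/- Let μ and ν be probability distributions on a measurable space such that for every measurable set S, μ(S) ≤ e^ε ν(S) + δ and ν(S) ≤ e^ε μ(S) + δ, with ε ∈ [0,1]. Let g be a measurable function into [0, M]. Then |E_μ[g] − E_ν[g]| ≤ (e^ε − 1 + δ)M. -/
/-!
By the layer-cake formula, `∫ g ∂π = ∫ t in (0, M], π {g ≥ t} dt` for `g` with values
in `[0, M]`. Integrating the tail bound `μ {g ≥ t} ≤ c ν {g ≥ t} + δ` over `t ∈ (0, M]` gives
`∫ g ∂μ ≤ c ∫ g ∂ν + δ M`, and `(c - 1) ∫ g ∂ν ≤ (c - 1) M` once `c ≥ 1`.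
-/

open MeasureTheory Set

namespace MeasureTheory

variable {α : Type*} [MeasurableSpace α]

lemma integrableOn_Ioc_measureReal_le (μ : Measure α) [IsFiniteMeasure μ] (f : α → ℝ)
    (a b : ℝ) : IntegrableOn (fun t ↦ μ.real {x | t ≤ f x}) (Ioc a b) := by
  have hanti : AntitoneOn (fun t ↦ μ.real {x | t ≤ f x}) (Icc a b) :=
    fun _ _ _ _ hst ↦ measureReal_mono fun _ hx ↦ hst.trans hx
  exact (hanti.integrableOn_isCompact isCompact_Icc).mono_set Ioc_subset_Icc_self

lemma integral_le_mul_integral_add_of_measureReal_le {μ ν : Measure α}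
    [IsFiniteMeasure μ] [IsFiniteMeasure ν] {c δ M : ℝ} (hM : 0 ≤ M)
    (hμν : ∀ S, MeasurableSet S → μ.real S ≤ c * ν.real S + δ)
    {g : α → ℝ} (hg : Measurable g) (hrange : ∀ x, g x ∈ Icc 0 M) :
    ∫ x, g x ∂μ ≤ c * (∫ x, g x ∂ν) + δ * M := by
  have layerCake (π : Measure α) [IsFiniteMeasure π] :
      ∫ x, g x ∂π = ∫ t in Ioc 0 M, π.real {x | t ≤ g x} :=
    Integrable.integral_eq_integral_Ioc_meas_le
      (Integrable.of_mem_Icc 0 M hg.aemeasurable (ae_of_all _ hrange))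
      (ae_of_all _ fun x ↦ (hrange x).1) (ae_of_all _ fun x ↦ (hrange x).2)
  have hν := integrableOn_Ioc_measureReal_le ν g 0 M
  rw [layerCake μ, layerCake ν]
  calc ∫ t in Ioc 0 M, μ.real {x | t ≤ g x}
      ≤ ∫ t in Ioc 0 M, (c * ν.real {x | t ≤ g x} + δ) :=
        setIntegral_mono_on (integrableOn_Ioc_measureReal_le μ g 0 M)
          ((hν.const_mul c).add (integrable_const δ)) measurableSet_Ioc
          fun t _ ↦ hμν _ (hg measurableSet_Ici)
    _ = c * (∫ t in Ioc 0 M, ν.real {x | t ≤ g x}) + δ * M := by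
        rw [integral_add (hν.const_mul c) (integrable_const δ), integral_const_mul,
          setIntegral_const]
        simp [hM, mul_comm]

lemma integral_sub_integral_le_of_measureReal_le {μ ν : Measure α}
    [IsFiniteMeasure μ] [IsProbabilityMeasure ν] {c δ M : ℝ} (hc : 1 ≤ c) (hM : 0 ≤ M)
    (hμν : ∀ S, MeasurableSet S → μ.real S ≤ c * ν.real S + δ)
    {g : α → ℝ} (hg : Measurable g) (hrange : ∀ x, g x ∈ Icc 0 M) :
    (∫ x, g x ∂μ) - (∫ x, g x ∂ν) ≤ (c - 1 + δ) * M := by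
  have hμ := integral_le_mul_integral_add_of_measureReal_le hM hμν hg hrange
  have hνM : ∫ x, g x ∂ν ≤ M := by
    simpa using integral_mono
      (Integrable.of_mem_Icc (μ := ν) 0 M hg.aemeasurable (ae_of_all _ hrange))
      (integrable_const M) fun x ↦ (hrange x).2
  have hcM : (c - 1) * (∫ x, g x ∂ν) ≤ (c - 1) * M :=
    mul_le_mul_of_nonneg_left hνM (sub_nonneg.mpr hc)
  linarith

end MeasureTheory

theorem abs_integral_sub_le_of_maxKL_close_general
    {Ω : Type*} [MeasurableSpace Ω] (μ ν : Measure Ω)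
    [IsProbabilityMeasure μ] [IsProbabilityMeasure ν]
    (ε δ M : ℝ) (hε0 : 0 ≤ ε) (hM : 0 ≤ M)
    (hclose₁ : ∀ S : Set Ω, MeasurableSet S →
      (μ S).toReal ≤ Real.exp ε * (ν S).toReal + δ)
    (hclose₂ : ∀ S : Set Ω, MeasurableSet S →
      (ν S).toReal ≤ Real.exp ε * (μ S).toReal + δ)
    (g : Ω → ℝ) (hg : Measurable g) (hrange : ∀ ω, g ω ∈ Set.Icc 0 M) :
    |(∫ ω, g ω ∂μ) - (∫ ω, g ω ∂ν)| ≤ (Real.exp ε - 1 + δ) * M := by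
  have hexp : 1 ≤ Real.exp ε := Real.one_le_exp hε0
  rw [abs_sub_le_iff]
  exact ⟨integral_sub_integral_le_of_measureReal_le hexp hM hclose₁ hg hrange,
    integral_sub_integral_le_of_measureReal_le hexp hM hclose₂ hg hrange⟩

/-- If `μ` and `ν` are (ε,δ)-max-KL close probability measures (with `ε ∈ [0,1]`)
and `g` is a measurable function into `[0, M]`, then
`|E_μ[g] − E_ν[g]| ≤ (e^ε − 1 + δ)·M`. -/
theorem abs_integral_sub_le_of_maxKL_close
    {Ω : Type*} [MeasurableSpace Ω] (μ ν : Measure Ω)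
    [IsProbabilityMeasure μ] [IsProbabilityMeasure ν]
    (ε δ M : ℝ) (hε0 : 0 ≤ ε) (hε1 : ε ≤ 1) (hδ : 0 ≤ δ) (hM : 0 ≤ M)
    (hclose₁ : ∀ S : Set Ω, MeasurableSet S →
      (μ S).toReal ≤ Real.exp ε * (ν S).toReal + δ)
    (hclose₂ : ∀ S : Set Ω, MeasurableSet S →
      (ν S).toReal ≤ Real.exp ε * (μ S).toReal + δ)
    (g : Ω → ℝ) (hg : Measurable g) (hrange : ∀ ω, g ω ∈ Set.Icc 0 M) :
    |(∫ ω, g ω ∂μ) - (∫ ω, g ω ∂ν)| ≤ (Real.exp ε - 1 + δ) * M :=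
  abs_integral_sub_le_of_maxKL_close_general μ ν ε δ M hε0 hM hclose₁ hclose₂ g hg hrange
end
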